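/- Consider f₀(x,w) = ¼w x₁⁴ − w x₁ − x₂ and F(x,w) = w x₁ + x₂ − w on ℝ² × ℝ. Using the KKT characterization S(w) = {x : F(x,w) ≤ 0, ∃λ ≥ 0, λF(x,w) = 0, ∇ₓf₀(x,w) + λ∇ₓF(x,w) = 0}, one has S(0) = ℝ × {0} and S(w) = {(0, w)} for every w ≠ 0; consequently S is not locally Lipschitz-like around (w̄, x̄) = (0, (0,0)). -/
import Mathlib


/-- The KKT stationary point set map for `f₀(x, w) = ¼ w x₁⁴ - w x₁ - x₂`,
`F(x, w) = w x₁ + x₂ - w`, where `∇ₓf₀(x, w) = (w x₁³ - w, -1)` and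
`∇ₓF(x, w) = (w, 1)`. -/
def Skkt (w : ℝ) : Set (ℝ × ℝ) :=
  {x : ℝ × ℝ | w * x.1 + x.2 - w ≤ 0 ∧
    ∃ lam : ℝ, 0 ≤ lam ∧ lam * (w * x.1 + x.2 - w) = 0 ∧
      (w * x.1 ^ 3 - w) + lam * w = 0 ∧ (-1 : ℝ) + lam * 1 = 0}

/-- `S : ℝ ⇉ ℝ²` is locally Lipschitz-like (Aubin property) around `(w̄, x̄)`. -/
def LipschitzLike (S : ℝ → Set (ℝ × ℝ)) (wbar : ℝ) (xbar : ℝ × ℝ) : Prop :=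
  ∃ L > (0 : ℝ), ∃ U ∈ nhds xbar, ∃ V ∈ nhds wbar,
    ∀ w ∈ V, ∀ w' ∈ V, ∀ x ∈ S w' ∩ U, ∃ y ∈ S w, ‖x - y‖ ≤ L * |w' - w|

lemma Skkt_zero : Skkt 0 = {x : ℝ × ℝ | x.2 = 0} := by
  ext x
  simp only [Skkt, Set.mem_setOf_eq]
  constructor
  · rintro ⟨h1, lam, hlam0, hlam1, _, hlam3⟩
    have : lam = 1 := by linarith
    subst this
    linarith [hlam1]
  · intro h
    refine ⟨by simp [h], 1, by norm_num, by simp [h], by ring, by ring⟩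

lemma Skkt_ne (w : ℝ) (hw : w ≠ 0) : Skkt w = {((0 : ℝ), w)} := by
  ext x
  simp only [Skkt, Set.mem_setOf_eq, Set.mem_singleton_iff, Prod.ext_iff]
  constructor
  · rintro ⟨h1, lam, hlam0, hlam1, h2, h3⟩
    have hl : lam = 1 := by linarith
    subst hl
    have hx1 : x.1 = 0 := by
      have : w * x.1 ^ 3 = 0 := by linarith
      rcases mul_eq_zero.mp this with h | h
      · exact absurd h hw
      · exact pow_eq_zero_iff (by norm_num) |>.mp h
    have hx2 : x.2 = w := by
      rw [hx1] at hlam1; nlinarith [hlam1]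
    exact ⟨hx1, hx2⟩
  · rintro ⟨h1, h2⟩
    refine ⟨by rw [h1, h2]; ring_nf; exact le_refl 0, 1, by norm_num, ?_, ?_, by ring⟩
    · rw [h1, h2]; ring
    · rw [h1]; ring

/-- One has `S(0) = ℝ × {0}` and `S(w) = {(0, w)}` for every `w ≠ 0`;
consequently `S` is not locally Lipschitz-like around `(0, (0, 0))`. -/
theorem example_not_lipschitzLike :
    Skkt 0 = {x : ℝ × ℝ | x.2 = 0} ∧
    (∀ w : ℝ, w ≠ 0 → Skkt w = {((0 : ℝ), w)}) ∧
    ¬ LipschitzLike Skkt 0 (0, 0) := by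
  refine ⟨Skkt_zero, fun w hw => Skkt_ne w hw, ?_⟩
  rintro ⟨L, hL, U, hU, V, hV, h⟩
  obtain ⟨ε, hε, hεU⟩ := Metric.mem_nhds_iff.mp hU
  obtain ⟨δ, hδ, hδV⟩ := Metric.mem_nhds_iff.mp hV
  set t : ℝ := ε / 2 with ht
  have ht0 : 0 < t := by positivity
  set w : ℝ := min (δ / 2) (t / (2 * L)) with hwdef
  have hw0 : 0 < w := by
    apply lt_min <;> positivity
  have hwV : w ∈ V := by
    apply hδV
    simp only [Metric.mem_ball, Real.dist_eq, sub_zero]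
    rw [abs_of_pos hw0]
    calc w ≤ δ / 2 := min_le_left _ _
      _ < δ := by linarith
  have h0V : (0 : ℝ) ∈ V := hδV (by simp [Metric.mem_ball, hδ])
  have hxU : ((t, 0) : ℝ × ℝ) ∈ U := by
    apply hεU
    simp only [Metric.mem_ball, Prod.dist_eq, Real.dist_eq]
    simp only [sub_zero]
    rw [abs_of_pos ht0]
    simp only [abs_zero]
    rw [max_eq_left ht0.le]
    linarith
  have hxS : ((t, 0) : ℝ × ℝ) ∈ Skkt 0 := by
    rw [Skkt_zero]; simp
  obtain ⟨y, hyS, hy⟩ := h w hwV 0 h0V (t, 0) ⟨hxS, hxU⟩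
  rw [Skkt_ne w hw0.ne'] at hyS
  rw [hyS] at hy
  have hnorm : ‖((t, 0) : ℝ × ℝ) - (0, w)‖ = max |t| |w| := by
    simp [Prod.norm_def, Real.norm_eq_abs]
  rw [hnorm] at hy
  have habs : |(0 : ℝ) - w| = w := by rw [abs_of_nonpos (by linarith)]; ring
  rw [habs] at hy
  have h1 : t ≤ L * w := le_trans (le_trans (le_abs_self t) (le_max_left _ _)) hy
  have h2 : L * w ≤ t / 2 := by
    have : w ≤ t / (2 * L) := min_le_right _ _
    calc L * w ≤ L * (t / (2 * L)) := by nlinarith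
      _ = t / 2 := by field_simp
  linarith
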